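/- Let A be a nonzero m×n real matrix and suppose that k GE steps (3 ≤ k ≤ min(m,n)) are performed on A with pivot qualities β_r = min(1/log(k−r+2), 1) for 1 ≤ r ≤ k (poor pivots early, good pivots late). Then the intermediate growth factor satisfies ρ_k(A) ≤ 2 · (log(k+2))^2 · (∏_{r=1}^{k−1} (log(r+2))^{1/r}) · √k · k^{(1/4)·log k}. -/

import Mathlib

open Finset Real

/-- One Gaussian elimination step on `A` with pivot position `(i, j)`:
`A_{st} - A_{sj} A_{it} / A_{ij}`. -/
noncomputable def geStep {m n : ℕ} (A : Matrix (Fin m) (Fin n) ℝ) (i : Fin m) (j : Fin n) :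
    Matrix (Fin m) (Fin n) ℝ :=
  Matrix.of fun s t => A s t - A s j * A i t / A i j

/-- The matrix `A^{(r)}` after `r` GE steps on `A`, where step `r` uses pivot
position `piv (r - 1)` (so `piv` is 0-indexed). -/
noncomputable def geIter {m n : ℕ} (A : Matrix (Fin m) (Fin n) ℝ)
    (piv : ℕ → Fin m × Fin n) : ℕ → Matrix (Fin m) (Fin n) ℝ
  | 0 => A
  | r + 1 => geStep (geIter A piv r) (piv r).1 (piv r).2

/-- Maximum absolute entry of a matrix. -/
noncomputable def maxAbs {m n : ℕ} (A : Matrix (Fin m) (Fin n) ℝ) : ℝ :=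
  ⨆ s, ⨆ t, |A s t|

/-- The magnitude `p_r = |A^{(r-1)}_{i_r j_r}|` of the `r`-th pivot (1-indexed `r`). -/
noncomputable def pivMag {m n : ℕ} (A : Matrix (Fin m) (Fin n) ℝ)
    (piv : ℕ → Fin m × Fin n) (r : ℕ) : ℝ :=
  |geIter A piv (r - 1) (piv (r - 1)).1 (piv (r - 1)).2|

/-!
Wilkinson's determinant argument, keeping track of the pivot qualities. Write
`M_i = max |A^{(i)}_{st}|` and `p_r` for the pivots. Bordering the last `d` pivot rows and
columns of `A^{(k-d)}` by an arbitrary row `s` and column `t` gives a `(d+1) × (d+1)` minor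
whose determinant is, by repeated Schur complements, `p_{k-d+1} ⋯ p_k · A^{(k)}_{st}`.
Hadamard's bound `|det Q| ≤ (√(d+1) · max |Q_{ab}|)^{d+1}` then yields
`p_{k-d+1} ⋯ p_k · M_k ≤ (√(d+1) · M_{k-d})^{d+1}` for every `d ≤ k`.
Since `M_{k-d} = p_{k-d+1} / β_{k-d+1}`, the logarithms of these `k + 1` inequalities form a
recursion that telescopes to
`log ρ_k ≤ ½ log (k+1) + ∑_{d=1}^{k} (½ log (d+1) - log β_{k+1-d}) / d`.
For the qualities of the theorem `-log β_{k+1-d} = log log (d+1)` when `d ≥ 2` (and `0` for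
`d = 1`), and `∑_{d ≤ k} log (d+1) / (2d)` is at most `¼ log² k` plus lower-order terms, by
induction on `k`.
-/

open Matrix

theorem abs_le_maxAbs {m n : ℕ} (A : Matrix (Fin m) (Fin n) ℝ) (s : Fin m) (t : Fin n) :
    |A s t| ≤ maxAbs A :=
  (le_ciSup (Finite.bddAbove_range fun t' => |A s t'|) t).trans
    (le_ciSup (Finite.bddAbove_range fun s' => ⨆ t', |A s' t'|) s)

theorem maxAbs_nonneg {m n : ℕ} (A : Matrix (Fin m) (Fin n) ℝ) : 0 ≤ maxAbs A :=
  Real.iSup_nonneg fun _ => Real.iSup_nonneg fun _ => abs_nonneg _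

theorem maxAbs_le {m n : ℕ} {A : Matrix (Fin m) (Fin n) ℝ} {c : ℝ} (hc : 0 ≤ c)
    (h : ∀ s t, |A s t| ≤ c) : maxAbs A ≤ c :=
  Real.iSup_le (fun s => Real.iSup_le (h s) hc) hc

theorem Real.prod_le_arith_mean_pow {ι : Type*} (s : Finset ι) {z : ι → ℝ}
    (hz : ∀ i ∈ s, 0 ≤ z i) : ∏ i ∈ s, z i ≤ ((∑ i ∈ s, z i) / #s) ^ #s := by
  rcases s.eq_empty_or_nonempty with rfl | hs
  · simp
  have hcard : (0 : ℝ) < #s := by exact_mod_cast hs.card_pos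
  have hprod : 0 ≤ ∏ i ∈ s, z i := prod_nonneg hz
  have amgm := geom_mean_le_arith_mean s (fun _ => 1) z (fun _ _ => zero_le_one)
    (by simpa using hcard) hz
  simp only [rpow_one, sum_const, nsmul_eq_mul, mul_one, one_mul] at amgm
  calc ∏ i ∈ s, z i = ((∏ i ∈ s, z i) ^ (#s : ℝ)⁻¹) ^ #s := by
        rw [← rpow_natCast, ← rpow_mul hprod, inv_mul_cancel₀ hcard.ne', rpow_one]
    _ ≤ ((∑ i ∈ s, z i) / #s) ^ #s := by gcongr

theorem Matrix.PosSemidef.det_le_trace_div_card_pow {ι : Type*} [Fintype ι] [DecidableEq ι]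
    {P : Matrix ι ι ℝ} (hP : P.PosSemidef) :
    P.det ≤ (P.trace / Fintype.card ι) ^ Fintype.card ι := by
  rw [hP.isHermitian.det_eq_prod_eigenvalues, hP.isHermitian.trace_eq_sum_eigenvalues]
  simpa using Real.prod_le_arith_mean_pow univ fun i _ => hP.eigenvalues_nonneg i

theorem Matrix.abs_det_le_of_abs_le {ι : Type*} [Fintype ι] [DecidableEq ι]
    (Q : Matrix ι ι ℝ) {c : ℝ} (hc : 0 ≤ c) (h : ∀ i j, |Q i j| ≤ c) :
    |Q.det| ≤ (√(Fintype.card ι) * c) ^ Fintype.card ι := by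
  set q := Fintype.card ι
  have hgram := posSemidef_conjTranspose_mul_self Q
  have htrace : (Qᴴ * Q).trace ≤ q * (q * c ^ 2) := by
    calc (Qᴴ * Q).trace = ∑ j, ∑ i, Q i j ^ 2 := by
          simp [Matrix.trace, Matrix.mul_apply, sq]
      _ ≤ ∑ _j : ι, ∑ _i : ι, c ^ 2 :=
          sum_le_sum fun j _ => sum_le_sum fun i _ =>
            sq_le_sq' (abs_le.1 (h i j)).1 (abs_le.1 (h i j)).2
      _ = q * (q * c ^ 2) := by simp [q]
  refine abs_le_of_sq_le_sq ?_ (by positivity)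
  calc Q.det ^ 2 = (Qᴴ * Q).det := by simp [det_mul, sq]
    _ ≤ ((Qᴴ * Q).trace / q) ^ q := hgram.det_le_trace_div_card_pow
    _ ≤ (q * c ^ 2) ^ q := by
        rcases Nat.eq_zero_or_pos q with hq | hq
        · simp [hq]
        gcongr
        · exact div_nonneg hgram.trace_nonneg q.cast_nonneg
        · rw [div_le_iff₀ (by exact_mod_cast hq)]; linarith
    _ = ((√q * c) ^ q) ^ 2 := by
        rw [← pow_mul, mul_comm q, pow_mul, mul_pow (√(q : ℝ)), sq_sqrt q.cast_nonneg,
          mul_pow]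

theorem det_eq_mul_det_geStep {q : ℕ} (B : Matrix (Fin (q + 1)) (Fin (q + 1)) ℝ)
    (h : B 0 0 ≠ 0) : B.det = B 0 0 * ((geStep B 0 0).submatrix Fin.succ Fin.succ).det := by
  -- `B'` arises from `B` by subtracting multiples of row `0`; its column `0` vanishes below row `0`
  set B' := (geStep B 0 0).updateRow 0 (B 0)
  have hrow : B.det = B'.det := by
    refine det_eq_of_forall_row_eq_smul_add_const (fun s => if s = 0 then 0 else B s 0 / B 0 0) 0
      (by simp) fun s t => ?_
    rcases eq_or_ne s 0 with rfl | hs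
    · simp [B']
    · simp [B', hs, geStep]; field_simp; ring
  rw [hrow, det_succ_column_zero, Fin.sum_univ_succ, Finset.sum_eq_zero fun s _ => by
    simp [B', geStep, Fin.succ_ne_zero, mul_div_cancel_right₀ _ h]]
  simp [B', ← Fin.succAbove_zero, submatrix_updateRow_succAbove]

section Minors

variable {m n : ℕ} (A : Matrix (Fin m) (Fin n) ℝ) (piv : ℕ → Fin m × Fin n)
  (R : ℕ → Fin m) (C : ℕ → Fin n)

noncomputable def geMinor (i d : ℕ) : Matrix (Fin (d + 1)) (Fin (d + 1)) ℝ :=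
  (geIter A piv i).submatrix (fun a => R (i + a)) (fun b => C (i + b))

theorem det_geMinor_succ {i : ℕ} (d : ℕ) (hR : R i = (piv i).1) (hC : C i = (piv i).2)
    (hpiv : geIter A piv i (piv i).1 (piv i).2 ≠ 0) :
    (geMinor A piv R C i (d + 1)).det =
      geIter A piv i (piv i).1 (piv i).2 * (geMinor A piv R C (i + 1) d).det := by
  have h00 : geMinor A piv R C i (d + 1) 0 0 = geIter A piv i (piv i).1 (piv i).2 := by
    simp [geMinor, hR, hC]
  rw [det_eq_mul_det_geStep _ (h00 ▸ hpiv), h00]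
  congr 2
  ext a b
  simp [geMinor, geStep, geIter, hR, hC, add_comm, add_left_comm]

theorem abs_det_geMinor {k : ℕ} (hpiv : ∀ r < k, geIter A piv r (piv r).1 (piv r).2 ≠ 0)
    (hR : ∀ j < k, R j = (piv j).1) (hC : ∀ j < k, C j = (piv j).2) :
    ∀ d i, i + d = k → |(geMinor A piv R C i d).det| =
      (∏ j ∈ Icc 1 d, pivMag A piv (k + 1 - j)) * |geIter A piv k (R k) (C k)| := by
  intro d
  induction d with
  | zero =>
    rintro i rfl
    simp [geMinor, det_unique]
  | succ d ih =>
    intro i hid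
    have hi : i < k := by omega
    rw [det_geMinor_succ A piv R C d (hR i hi) (hC i hi) (hpiv i hi), abs_mul,
      ih (i + 1) (by omega), prod_Icc_succ_top (by omega),
      show k + 1 - (d + 1) = i + 1 by omega]
    simp only [pivMag, add_tsub_cancel_right]
    ring

end Minors

theorem pivMag_pos {m n k : ℕ} {A : Matrix (Fin m) (Fin n) ℝ} {piv : ℕ → Fin m × Fin n}
    (hpiv : ∀ r < k, geIter A piv r (piv r).1 (piv r).2 ≠ 0) {r : ℕ} (hr : 1 ≤ r)
    (hrk : r ≤ k) :
    0 < pivMag A piv r :=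
  abs_pos.2 (hpiv _ (by omega))

theorem prod_pivMag_mul_maxAbs_le {m n k d : ℕ} (A : Matrix (Fin m) (Fin n) ℝ)
    (piv : ℕ → Fin m × Fin n) (hpiv : ∀ r < k, geIter A piv r (piv r).1 (piv r).2 ≠ 0)
    (hd : d ≤ k) :
    (∏ j ∈ Icc 1 d, pivMag A piv (k + 1 - j)) * maxAbs (geIter A piv k) ≤
      (√(d + 1) * maxAbs (geIter A piv (k - d))) ^ (d + 1) := by
  have hP : 0 < ∏ j ∈ Icc 1 d, pivMag A piv (k + 1 - j) :=
    prod_pos fun j hj => pivMag_pos hpiv (by simp at hj; omega) (by simp at hj; omega)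
  have hbound : 0 ≤ (√(d + 1) * maxAbs (geIter A piv (k - d))) ^ (d + 1) :=
    pow_nonneg (mul_nonneg (sqrt_nonneg _) (maxAbs_nonneg _)) _
  rw [← le_div_iff₀' hP]
  refine maxAbs_le (div_nonneg hbound hP.le) fun s t => (le_div_iff₀' hP).2 ?_
  let R j := if j < k then (piv j).1 else s
  let C j := if j < k then (piv j).2 else t
  have hminor := abs_det_geMinor A piv R C hpiv (fun j hj => if_pos hj) (fun j hj => if_pos hj)
    d (k - d) (by omega)
  simp only [R, C, lt_irrefl, if_false] at hminor
  rw [← hminor]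
  simpa using (geMinor A piv R C (k - d) d).abs_det_le_of_abs_le (maxAbs_nonneg _)
    fun a b => abs_le_maxAbs (geIter A piv (k - d)) _ _

theorem wilkinson_telescope (k : ℕ) (L : ℝ) (a b c : ℕ → ℝ)
    (h : ∀ d ≤ k, L + ∑ j ∈ Icc 1 d, a j ≤ (d + 1) * (c d + b d)) :
    L ≤ c k + b k + ∑ d ∈ Icc 1 k, (c d + b d - a d) / d := by
  set T : ℕ → ℝ := fun d => L + ∑ j ∈ Icc 1 d, a j
  have step : ∀ n < k, T n / (n + 1) ≤
      T (n + 1) / (n + 1 + 1) + (c (n + 1) + b (n + 1) - a (n + 1)) / (n + 1) := by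
    intro n hn
    have hT : T n = T (n + 1) - a (n + 1) := by
      simp only [T, sum_Icc_succ_top (Nat.le_add_left 1 n)]; ring
    have hbound : T (n + 1) ≤ (n + 1 + 1) * (c (n + 1) + b (n + 1)) := by
      exact_mod_cast h (n + 1) hn
    rw [div_add_div _ _ (by positivity) (by positivity), div_le_div_iff₀ (by positivity)
      (by positivity), hT]
    nlinarith [mul_le_mul_of_nonneg_left hbound (by positivity : (0 : ℝ) ≤ n + 1)]
  have chain : ∀ n ≤ k, L ≤ T n / (n + 1) + ∑ d ∈ Icc 1 n, (c d + b d - a d) / d := by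
    intro n
    induction n with
    | zero => intro; simp [T]
    | succ n ih =>
      intro hn
      rw [sum_Icc_succ_top (Nat.le_add_left 1 n)]
      push_cast
      linarith [ih (by omega), step n hn]
  have hk : T k / (k + 1) ≤ c k + b k := by
    rw [div_le_iff₀ (by positivity)]; linarith [h k le_rfl]
  linarith [chain k le_rfl]

noncomputable def pivQuality {m n : ℕ} (A : Matrix (Fin m) (Fin n) ℝ)
    (piv : ℕ → Fin m × Fin n) (r : ℕ) : ℝ :=
  pivMag A piv r / maxAbs (geIter A piv (r - 1))

theorem maxAbs_geIter_le_mul_exp {m n k : ℕ} (A : Matrix (Fin m) (Fin n) ℝ)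
    (piv : ℕ → Fin m × Fin n) (hpiv : ∀ r < k, geIter A piv r (piv r).1 (piv r).2 ≠ 0) :
    maxAbs (geIter A piv k) ≤ maxAbs A * exp (log (k + 1) / 2 +
      ∑ d ∈ Icc 1 k, (log (d + 1) / 2 - log (pivQuality A piv (k + 1 - d))) / d) := by
  rcases (maxAbs_nonneg (geIter A piv k)).eq_or_lt with hzero | hMk
  · rw [← hzero]; exact mul_nonneg (maxAbs_nonneg A) (exp_pos _).le
  have hM : ∀ i ≤ k, 0 < maxAbs (geIter A piv i) := fun i hi =>
    hi.eq_or_lt.elim (· ▸ hMk) fun hi => (abs_pos.2 (hpiv i hi)).trans_le (abs_le_maxAbs _ _ _)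
  have hlog : ∀ d ≤ k,
      log (maxAbs (geIter A piv k)) + ∑ j ∈ Icc 1 d, log (pivMag A piv (k + 1 - j)) ≤
        (d + 1) * (log (d + 1) / 2 + log (maxAbs (geIter A piv (k - d)))) := by
    intro d hd
    have hp : ∀ j ∈ Icc 1 d, 0 < pivMag A piv (k + 1 - j) := fun j hj =>
      pivMag_pos hpiv (by simp at hj; omega) (by simp at hj; omega)
    have := log_le_log (mul_pos (prod_pos hp) hMk)
      (prod_pivMag_mul_maxAbs_le A piv hpiv hd)
    rw [log_mul (prod_pos hp).ne' hMk.ne', log_prod fun j hj => (hp j hj).ne', log_pow,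
      log_mul (by positivity) (hM _ (Nat.sub_le k d)).ne', log_sqrt (by positivity)] at this
    push_cast at this
    linarith
  have hsum := wilkinson_telescope k _ _ _ _ hlog
  have hquality : ∀ d ∈ Icc 1 k, log (d + 1) / 2 + log (maxAbs (geIter A piv (k - d))) -
      log (pivMag A piv (k + 1 - d)) = log (d + 1) / 2 - log (pivQuality A piv (k + 1 - d)) := by
    intro d hd
    simp only [mem_Icc] at hd
    rw [pivQuality, log_div (pivMag_pos hpiv (by omega) (by omega)).ne'
      (hM _ (by omega)).ne', show k + 1 - d - 1 = k - d by omega]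
    ring
  rw [sum_congr rfl fun d hd => by rw [hquality d hd], Nat.sub_self] at hsum
  calc maxAbs (geIter A piv k) = exp (log (maxAbs (geIter A piv k))) := (exp_log hMk).symm
    _ ≤ exp (log (maxAbs A) + (log (k + 1) / 2 +
          ∑ d ∈ Icc 1 k, (log (d + 1) / 2 - log (pivQuality A piv (k + 1 - d))) / d)) :=
        exp_le_exp.2 (by simp only [geIter] at hsum; linarith)
    _ = _ := by
      have hM0 : 0 < maxAbs A := hM 0 k.zero_le
      rw [exp_add, exp_log hM0]

theorem one_lt_log_three : 1 < log 3 := by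
  rw [lt_log_iff_exp_lt (by norm_num)]
  linarith [exp_one_lt_d9]

theorem log_sub_log_le_div {x y : ℝ} (hx : 0 < x) (hy : 0 < y) :
    log y - log x ≤ (y - x) / x := by
  have := log_le_sub_one_of_pos (div_pos hy hx)
  rwa [log_div hy.ne' hx.ne', div_sub_one hx.ne'] at this

theorem div_le_log_sub_log {x y : ℝ} (hx : 0 < x) (hy : 0 < y) :
    (y - x) / y ≤ log y - log x := by
  have := log_sub_log_le_div hy hx
  rw [← neg_sub y x, neg_div] at this
  linarith

theorem wilkinson_sum_le {k : ℕ} (hk : 3 ≤ k) :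
    log (k + 1) / 2 + ∑ d ∈ Icc 1 k, log (d + 1) / 2 / d + 1 / k ≤
      log 2 + 2 * log (log (k + 2)) + log k / 2 + log k * log k / 4 := by
  induction k, hk using Nat.le_induction with
  | base =>
    have hsum : ∑ d ∈ Icc (1 : ℕ) 3, log ((d : ℝ) + 1) / 2 / d =
        log 2 / 2 + log 3 / 4 + log 4 / 6 := by
      rw [show Icc 1 3 = {1, 2, 3} from rfl]
      simp; norm_num; ring
    have hlog4 : log 4 = 2 * log 2 := by
      rw [show (4 : ℝ) = 2 ^ 2 by norm_num, log_pow]; norm_num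
    have hlog5 : 1.38 ≤ log 5 := by
      linarith [log_le_log (by norm_num : (0 : ℝ) < 4) (by norm_num : (4 : ℝ) ≤ 5),
        log_two_gt_d9]
    have hloglog5 : 0.27 ≤ log (log 5) := by
      have hinv : (log 5)⁻¹ ≤ 1.38⁻¹ := inv_anti₀ (by norm_num) hlog5
      linarith [one_sub_inv_le_log_of_pos (by linarith : 0 < log 5)]
    rw [hsum]
    norm_num
    nlinarith [log_two_lt_d9, one_lt_log_three]
  | succ k hk ih =>
    have hK : (3 : ℝ) ≤ k := by exact_mod_cast hk
    rw [sum_Icc_succ_top (by omega)]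
    push_cast at ih ⊢
    set x := log k
    set y := log (k + 1)
    set z := log (k + 1 + 1)
    have hx : 0 ≤ x := log_nonneg (by linarith)
    have hxy : x ≤ y := log_le_log (by linarith) (by linarith)
    have hconcave : z + x ≤ 2 * y := by
      rw [← log_mul (by linarith) (by linarith), ← log_rpow (by linarith)]
      exact log_le_log (by positivity) (by norm_num; nlinarith)
    have hzx : z - x ≤ 2 / k := by
      have := log_sub_log_le_div (x := k) (y := k + 1 + 1) (by linarith) (by linarith)
      rwa [show (k : ℝ) + 1 + 1 - k = 2 by ring] at this
    have hyx : 1 / (k + 1) ≤ y - x := by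
      have := div_le_log_sub_log (x := k) (y := k + 1) (by linarith) (by linarith)
      rwa [show (k : ℝ) + 1 - k = 1 by ring] at this
    have hloglog : log (log (k + 2)) ≤ log (log (k + 1 + 2)) := by
      have h3 : log 3 ≤ log (k + 2) := log_le_log (by norm_num) (by linarith)
      gcongr
      · linarith [one_lt_log_three]
      · linarith
    have hk0 : (0 : ℝ) < k := by linarith
    have hsq : 2 * x / (k + 1) ≤ y * y - x * x := by
      calc 2 * x / (k + 1) = 1 / (k + 1) * (2 * x) := by ring
        _ ≤ (y - x) * (y + x) := by gcongr; linarith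
        _ = y * y - x * x := by ring
    have hterm : z / 2 / (k + 1) ≤ (y * y - x * x) / 4 + 1 / (k * (k + 1)) := by
      calc z / 2 / (k + 1) ≤ (x + 2 / k) / 2 / (k + 1) := by gcongr; linarith
        _ = 2 * x / (k + 1) / 4 + 1 / (k * (k + 1)) := by field_simp; ring
        _ ≤ _ := by linarith
    -- the slack `1 / k` pays for the error `1 / (k (k + 1))` in `hterm`
    have hslack : (1 : ℝ) / (k + 1) = 1 / k - 1 / (k * (k + 1)) := by field_simp; ring
    linarith

theorem neg_log_min_inv_log_div_le {x : ℝ} (hx : 2 ≤ x) :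
    -log (min (log (x + 1))⁻¹ 1) / x ≤ (x - 1)⁻¹ * log (log (x + 1)) := by
  have hlog : 1 < log (x + 1) :=
    one_lt_log_three.trans_le (log_le_log (by norm_num) (by linarith))
  rw [min_eq_left (inv_le_one_of_one_le₀ hlog.le), log_inv, neg_neg, div_eq_inv_mul]
  gcongr
  · exact log_nonneg hlog.le
  · linarith
  · linarith

theorem neg_sum_log_min_inv_log_le (k : ℕ) :
    -∑ d ∈ Icc 1 k, log (min (log (d + 1))⁻¹ 1) / d ≤
      ∑ r ∈ Icc 1 (k - 1), (r : ℝ)⁻¹ * log (log (r + 2)) := by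
  induction k with
  | zero => simp
  | succ k ih =>
    rcases k with _ | k
    · have : 1 ≤ (log 2)⁻¹ :=
        one_le_inv_iff₀.2 ⟨log_pos one_lt_two, by linarith [log_two_lt_d9]⟩
      norm_num [min_eq_right this]
    rw [sum_Icc_succ_top (by omega), show k + 1 + 1 - 1 = k + 1 by omega,
      sum_Icc_succ_top (f := fun r : ℕ => (r : ℝ)⁻¹ * log (log (r + 2))) (by omega)]
    have := neg_log_min_inv_log_div_le (x := k + 1 + 1) (by linarith [k.cast_nonneg (α := ℝ)])
    simp only [k.add_one_sub_one] at ih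
    push_cast at ih this ⊢
    ring_nf at ih this ⊢
    linarith

theorem exp_growth_exponent_le {k : ℕ} (hk : 3 ≤ k) :
    exp (log (k + 1) / 2 +
        ∑ d ∈ Icc 1 k, (log (d + 1) / 2 - log (min (log (d + 1))⁻¹ 1)) / d) ≤
      2 * log (k + 2) ^ 2 * (∏ r ∈ Icc 1 (k - 1), log (r + 2) ^ (r : ℝ)⁻¹) * √k *
        (k : ℝ) ^ (1 / 4 * log k) := by
  have hk0 : (0 : ℝ) < k := by exact_mod_cast (by omega : 0 < k)
  have hlog : ∀ r : ℕ, 0 < log (r + 2) := fun r =>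
    log_pos (by linarith [r.cast_nonneg (α := ℝ)])
  have hprod : 0 < ∏ r ∈ Icc 1 (k - 1), log (r + 2) ^ (r : ℝ)⁻¹ :=
    prod_pos fun r _ => rpow_pos_of_pos (hlog r) _
  have hk2 := hlog k
  rw [← le_log_iff_exp_le (by positivity), log_mul (by positivity) (by positivity),
    log_mul (by positivity) (by positivity), log_mul (by positivity) hprod.ne',
    log_mul (by norm_num) (by positivity), log_pow, log_sqrt hk0.le, log_rpow hk0,
    log_prod fun r _ => (rpow_pos_of_pos (hlog r) _).ne']
  simp only [log_rpow (hlog _), sub_div, sum_sub_distrib]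
  have := wilkinson_sum_le hk
  have := neg_sum_log_min_inv_log_le k
  have : 0 < 1 / (k : ℝ) := by positivity
  push_cast
  linarith

theorem ge_growth_logarithmic_pivot_quality_general
    (m n k : ℕ) (A : Matrix (Fin m) (Fin n) ℝ)
    (hk : 3 ≤ k)
    (piv : ℕ → Fin m × Fin n)
    (hpiv : ∀ r < k, geIter A piv r (piv r).1 (piv r).2 ≠ 0)
    (β : ℕ → ℝ)
    (hβval : ∀ r, 1 ≤ r → r ≤ k →
      β r = min (Real.log ((k : ℝ) - (r : ℝ) + 2))⁻¹ 1)
    (hβdef : ∀ r, 1 ≤ r → r ≤ k →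
      β r = pivMag A piv r / maxAbs (geIter A piv (r - 1))) :
    maxAbs (geIter A piv k) / maxAbs A ≤
      2 * (Real.log ((k : ℝ) + 2)) ^ 2 *
        (∏ r ∈ Finset.Icc 1 (k - 1), (Real.log ((r : ℝ) + 2)) ^ ((r : ℝ))⁻¹) *
        Real.sqrt k * (k : ℝ) ^ ((1 / 4 : ℝ) * Real.log k) := by
  have hM0 : 0 < maxAbs A :=
    (abs_pos.2 (hpiv 0 (by omega))).trans_le (abs_le_maxAbs (geIter A piv 0) _ _)
  have hquality : ∀ d ∈ Icc 1 k, pivQuality A piv (k + 1 - d) = min (log (d + 1))⁻¹ 1 := by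
    intro d hd
    simp only [mem_Icc] at hd
    rw [pivQuality, ← hβdef _ (by omega) (by omega), hβval _ (by omega) (by omega),
      Nat.cast_sub (by omega)]
    push_cast
    ring_nf
  calc maxAbs (geIter A piv k) / maxAbs A
      ≤ exp (log (k + 1) / 2 +
          ∑ d ∈ Icc 1 k, (log (d + 1) / 2 - log (pivQuality A piv (k + 1 - d))) / d) :=
        (div_le_iff₀' hM0).2 (maxAbs_geIter_le_mul_exp A piv hpiv)
    _ = exp (log (k + 1) / 2 +
          ∑ d ∈ Icc 1 k, (log (d + 1) / 2 - log (min (log (d + 1))⁻¹ 1)) / d) := by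
        rw [sum_congr rfl fun d hd => by rw [hquality d hd]]
    _ ≤ _ := exp_growth_exponent_le hk

/-- **Example 2 (poor early pivots, good late pivots).** If the pivot qualities are
`β_r = min(1/log(k-r+2), 1)` for `1 ≤ r ≤ k`, then
`ρ_k(A) ≤ 2 (log(k+2))² (∏_{r=1}^{k-1} (log(r+2))^{1/r}) √k k^{(1/4) log k}`. -/
theorem ge_growth_logarithmic_pivot_quality
    (m n k : ℕ) (A : Matrix (Fin m) (Fin n) ℝ) (hA : A ≠ 0)
    (hk : 3 ≤ k) (hkmn : k ≤ min m n)
    (piv : ℕ → Fin m × Fin n)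
    (hpiv : ∀ r < k, geIter A piv r (piv r).1 (piv r).2 ≠ 0)
    (β : ℕ → ℝ)
    (hβval : ∀ r, 1 ≤ r → r ≤ k →
      β r = min (Real.log ((k : ℝ) - (r : ℝ) + 2))⁻¹ 1)
    (hβdef : ∀ r, 1 ≤ r → r ≤ k →
      β r = pivMag A piv r / maxAbs (geIter A piv (r - 1))) :
    maxAbs (geIter A piv k) / maxAbs A ≤
      2 * (Real.log ((k : ℝ) + 2)) ^ 2 *
        (∏ r ∈ Finset.Icc 1 (k - 1), (Real.log ((r : ℝ) + 2)) ^ ((r : ℝ))⁻¹) *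
        Real.sqrt k * (k : ℝ) ^ ((1 / 4 : ℝ) * Real.log k) :=
  ge_growth_logarithmic_pivot_quality_general m n k A hk piv hpiv β hβval hβdef
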